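/- The realizations ⟨1, u, u² − u_x²⟩ of sl(2,ℝ) and ⟨u_t, −t·u_t + λ·u_x, t²·u_t + 2λ·t·u_x⟩ commute elementwise under the contact bracket: for every λ ∈ ℝ, each bracket [gᵢ, hⱼ] = 0 for gᵢ ∈ {1, u, u² − u_x²} and hⱼ ∈ {u_t, −t·u_t − λ·u_x, t²·u_t + 2λ·t·u_x}. -/

import Mathlib

/-- Partial derivative in direction `i` of a function on `ℝ⁵ = Fin 5 → ℝ`.
Coordinates: 0 = t, 1 = x, 2 = u, 3 = p (= u_t), 4 = q (= u_x). -/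
noncomputable def pd (i : Fin 5) (f : (Fin 5 → ℝ) → ℝ) (v : Fin 5 → ℝ) : ℝ :=
  fderiv ℝ f v (Pi.single i 1)

/-- The contact bracket of two generating functions. -/
noncomputable def cbracket (f g : (Fin 5 → ℝ) → ℝ) (v : Fin 5 → ℝ) : ℝ :=
  (pd 3 g v * pd 2 f v - pd 3 f v * pd 2 g v) * v 3
  + (pd 4 g v * pd 2 f v - pd 4 f v * pd 2 g v) * v 4
  + pd 3 g v * pd 0 f v - pd 3 f v * pd 0 g v
  + pd 4 g v * pd 1 f v - pd 4 f v * pd 1 g v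
  + f v * pd 2 g v - g v * pd 2 f v

section Calculus

variable (i : Fin 5) {f g : (Fin 5 → ℝ) → ℝ} {v : Fin 5 → ℝ}

theorem pd_const (c : ℝ) : pd i (fun _ => c) v = 0 := by
  simp [pd]

theorem pd_coord (j : Fin 5) :
    pd i (fun w => w j) v = if j = i then 1 else 0 := by
  rw [pd, show (fun w : Fin 5 → ℝ => w j) = ContinuousLinearMap.proj (R := ℝ) j from rfl,
    ContinuousLinearMap.fderiv]
  simp [Pi.single_apply]

theorem pd_neg : pd i (fun w => -f w) v = -pd i f v := by
  simp [pd]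

theorem pd_add (hf : DifferentiableAt ℝ f v) (hg : DifferentiableAt ℝ g v) :
    pd i (fun w => f w + g w) v = pd i f v + pd i g v := by
  simp [pd, fderiv_fun_add hf hg]

theorem pd_sub (hf : DifferentiableAt ℝ f v) (hg : DifferentiableAt ℝ g v) :
    pd i (fun w => f w - g w) v = pd i f v - pd i g v := by
  simp [pd, fderiv_fun_sub hf hg]

theorem pd_mul (hf : DifferentiableAt ℝ f v) (hg : DifferentiableAt ℝ g v) :
    pd i (fun w => f w * g w) v = pd i f v * g v + f v * pd i g v := by
  simp [pd, fderiv_fun_mul hf hg, add_comm, mul_comm]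

theorem pd_pow (n : ℕ) (hf : DifferentiableAt ℝ f v) :
    pd i (fun w => f w ^ n) v = n * f v ^ (n - 1) * pd i f v := by
  simp [pd, fderiv_fun_pow n hf]

end Calculus

/-- The realizations ⟨1, u, u² − u_x²⟩ and ⟨u_t, −t·u_t − λ·u_x, t²·u_t + 2λ·t·u_x⟩
commute elementwise under the contact bracket. -/
theorem so22_commuting (lam : ℝ) (v : Fin 5 → ℝ) :
    let g₁ : (Fin 5 → ℝ) → ℝ := fun _ => 1
    let g₂ : (Fin 5 → ℝ) → ℝ := fun w => w 2
    let g₃ : (Fin 5 → ℝ) → ℝ := fun w => (w 2) ^ 2 - (w 4) ^ 2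
    let h₁ : (Fin 5 → ℝ) → ℝ := fun w => w 3
    let h₂ : (Fin 5 → ℝ) → ℝ := fun w => - w 0 * w 3 - lam * w 4
    let h₃ : (Fin 5 → ℝ) → ℝ := fun w => (w 0) ^ 2 * w 3 + 2 * lam * w 0 * w 4
    cbracket g₁ h₁ v = 0 ∧ cbracket g₁ h₂ v = 0 ∧ cbracket g₁ h₃ v = 0 ∧
    cbracket g₂ h₁ v = 0 ∧ cbracket g₂ h₂ v = 0 ∧ cbracket g₂ h₃ v = 0 ∧
    cbracket g₃ h₁ v = 0 ∧ cbracket g₃ h₂ v = 0 ∧ cbracket g₃ h₃ v = 0 := by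
  intro g₁ g₂ g₃ h₁ h₂ h₃
  simp (disch := fun_prop) only [g₁, g₂, g₃, h₁, h₂, h₃, cbracket,
    pd_const, pd_coord, pd_neg, pd_add, pd_sub, pd_mul, pd_pow]
  simp only [Fin.reduceEq, if_true, if_false]
  refine ⟨?_, ?_, ?_, ?_, ?_, ?_, ?_, ?_, ?_⟩ <;> ring
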